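/- arXiv:2304.12915 — 2 statements merged into one kernel-verified Lean document; each statement's English description precedes it below -/
import Mathlib

section
/- The cycle C₆ is embeddable in its complement, and for every embedding σ of C₆, the graph C₆ ⊕ σ(C₆) is a 4-regular graph on 6 vertices whose complement is a perfect matching; hence any two such graphs are isomorphic and C₆ is uniquely embeddable. -/
open SimpleGraph

/-- The cycle graph on `ZMod n`: `i` and `j` adjacent iff they differ by one. -/
def CycGraph (n : ℕ) : SimpleGraph (ZMod n) where
  Adj i j := i ≠ j ∧ (i = j + 1 ∨ j = i + 1)
  symm := by refine ⟨?_⟩; rintro i j ⟨hne, h⟩; exact ⟨hne.symm, h.symm⟩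
  loopless := by refine ⟨?_⟩; rintro i ⟨hne, _⟩; exact hne rfl

/-- `σ` is an embedding of `G` into its complement. -/
def IsGraphEmbedding {V : Type*} (G : SimpleGraph V) (σ : Equiv.Perm V) : Prop :=
  ∀ x y, G.Adj x y → ¬ G.Adj (σ x) (σ y)

/-- The edge sum `G ⊕ σ(G)`. -/
def EdgeSum {V : Type*} (G : SimpleGraph V) (σ : Equiv.Perm V) : SimpleGraph V :=
  G ⊔ G.map σ.toEmbedding

/-- Vertex-disjoint union of two graphs. -/
def DisjUnion {α β : Type*} (G : SimpleGraph α) (H : SimpleGraph β) :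
    SimpleGraph (α ⊕ β) where
  Adj x y :=
    (∃ a b, x = Sum.inl a ∧ y = Sum.inl b ∧ G.Adj a b) ∨
    (∃ a b, x = Sum.inr a ∧ y = Sum.inr b ∧ H.Adj a b)
  symm := by
    refine ⟨?_⟩
    rintro x y (⟨a, b, rfl, rfl, h⟩ | ⟨a, b, rfl, rfl, h⟩)
    · exact Or.inl ⟨b, a, rfl, rfl, h.symm⟩
    · exact Or.inr ⟨b, a, rfl, rfl, h.symm⟩
  loopless := by
    refine ⟨?_⟩
    rintro x (⟨a, b, rfl, h, hadj⟩ | ⟨a, b, rfl, h, hadj⟩) <;>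
      · cases h; exact hadj.ne rfl

/-! For an embedding `σ` of `G` the edge sets of `G` and `σ(G)` are disjoint, so degrees add up:
every vertex of `C₆ ⊕ σ(C₆)` has degree `2 + 2 = 4`. On six vertices the complement is then
`1`-regular, that is, a perfect matching, given by a fixed-point-free involution. Two such
involutions have cycle type `2 + 2 + 2`, so they are conjugate,
and a conjugating permutation is an isomorphism between the two edge sums. -/

variable {V : Type*}

theorem CycGraph.neighborSet_eq {n : ℕ} (hn : 3 ≤ n) (v : ZMod n) :
    (CycGraph n).neighborSet v = {v + 1, v - 1} := by
  have : Fact (1 < n) := ⟨by omega⟩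
  ext w
  simp only [mem_neighborSet, CycGraph, Set.mem_insert_iff, Set.mem_singleton_iff]
  constructor
  · rintro ⟨-, rfl | rfl⟩
    · exact Or.inr (add_sub_cancel_right w 1).symm
    · exact Or.inl rfl
  · rintro (rfl | rfl)
    · exact ⟨by simp, Or.inr rfl⟩
    · exact ⟨fun h => one_ne_zero (sub_eq_self.1 h.symm), Or.inl (sub_add_cancel v 1).symm⟩

theorem CycGraph.ncard_neighborSet {n : ℕ} (hn : 3 ≤ n) (v : ZMod n) :
    ((CycGraph n).neighborSet v).ncard = 2 := by
  have two_ne_zero : (2 : ZMod n) ≠ 0 := fun h => absurd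
    (Nat.le_of_dvd two_pos ((ZMod.natCast_eq_zero_iff 2 n).1 (by exact_mod_cast h))) (by omega)
  rw [CycGraph.neighborSet_eq hn, Set.ncard_pair fun h => two_ne_zero (by linear_combination h)]

theorem isGraphEmbedding_cycGraph_six : IsGraphEmbedding (CycGraph 6) c[1, 2, 5, 4] := by
  simp only [IsGraphEmbedding, CycGraph]
  decide

namespace IsGraphEmbedding

variable {G : SimpleGraph V} {σ : Equiv.Perm V}

theorem disjoint_map (h : IsGraphEmbedding G σ) : Disjoint G (G.map σ.toEmbedding) := by
  refine disjoint_left.2 fun a b hab hmap => ?_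
  rw [map_adj] at hmap
  obtain ⟨x, y, hxy, rfl, rfl⟩ := hmap
  exact h x y hxy hab

theorem ncard_neighborSet_edgeSum [Finite V] (h : IsGraphEmbedding G σ) (v : V) :
    ((EdgeSum G σ).neighborSet v).ncard =
      (G.neighborSet v).ncard + (G.neighborSet (σ.symm v)).ncard := by
  have hdisj : Disjoint (G.neighborSet v) ((G.map σ.toEmbedding).neighborSet v) :=
    Set.disjoint_left.2 fun w h₁ h₂ => h.disjoint_map.le_bot ⟨h₁, h₂⟩
  obtain ⟨u, rfl⟩ := σ.surjective v
  rw [EdgeSum, neighborSet_sup, Set.ncard_union_eq hdisj, ← Equiv.coe_toEmbedding,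
    neighborSet_map, Set.ncard_image_of_injective _ σ.toEmbedding.injective,
    Equiv.coe_toEmbedding, Equiv.symm_apply_apply]

end IsGraphEmbedding

namespace Equiv.Perm

theorem cycleType_eq_replicate_of_involutive [Fintype V] [DecidableEq V]
    {m : Perm V} (hinv : Function.Involutive m) (hfix : ∀ v, m v ≠ v) :
    m.cycleType = Multiset.replicate (Fintype.card V / 2) 2 := by
  have hsq : m ^ 2 = 1 := Equiv.ext hinv
  have htwo : ∀ n ∈ m.cycleType, n = 2 := fun n hn =>
    le_antisymm (Nat.le_of_dvd two_pos ((dvd_of_mem_cycleType hn).trans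
      (orderOf_dvd_of_pow_eq_one hsq))) (two_le_of_mem_cycleType hn)
  have hsum : m.cycleType.sum = Fintype.card V := by
    rw [sum_cycleType,
      Finset.eq_univ_of_forall fun v => mem_support.2 (hfix v), Finset.card_univ]
  rw [Multiset.eq_replicate_of_mem htwo] at hsum ⊢
  rw [Multiset.sum_replicate, smul_eq_mul] at hsum
  congr
  omega

end Equiv.Perm

namespace SimpleGraph

theorem ncard_neighborSet_compl [Finite V] (G : SimpleGraph V) (v : V) :
    (Gᶜ.neighborSet v).ncard = Nat.card V - 1 - (G.neighborSet v).ncard := by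
  rw [neighborSet_compl, Set.ncard_sdiff_singleton_of_mem (by simp), Set.ncard_compl]
  omega

theorem ncard_neighborSet_eq_one_iff (G : SimpleGraph V) (v : V) :
    (G.neighborSet v).ncard = 1 ↔ ∃! w, G.Adj v w := by
  rw [Set.ncard_eq_one]
  exact exists_congr fun w => Set.eq_singleton_iff_unique_mem

theorem exists_involutive_of_existsUnique_compl_adj {G : SimpleGraph V}
    (h : ∀ v, ∃! w, Gᶜ.Adj v w) :
    ∃ m : Equiv.Perm V, Function.Involutive m ∧ (∀ v, m v ≠ v) ∧
      ∀ v w, G.Adj v w ↔ v ≠ w ∧ w ≠ m v := by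
  choose f hf hu using h
  have hinv : Function.Involutive f := fun v => (hu (f v) v (hf v).symm).symm
  refine ⟨hinv.toPerm, hinv, fun v => (hf v).ne', fun v w => ?_⟩
  have hcompl : Gᶜ.Adj v w ↔ w = f v := ⟨hu v w, fun hw => hw ▸ hf v⟩
  rw [compl_adj] at hcompl
  have : G.Adj v w → v ≠ w := G.ne_of_adj
  change G.Adj v w ↔ v ≠ w ∧ w ≠ f v
  tauto

theorem nonempty_iso_of_existsUnique_compl_adj [Finite V] {G H : SimpleGraph V}
    (hG : ∀ v, ∃! w, Gᶜ.Adj v w) (hH : ∀ v, ∃! w, Hᶜ.Adj v w) : Nonempty (G ≃g H) := by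
  classical
  have := Fintype.ofFinite V
  obtain ⟨m₁, hinv₁, hfix₁, hadj₁⟩ := exists_involutive_of_existsUnique_compl_adj hG
  obtain ⟨m₂, hinv₂, hfix₂, hadj₂⟩ := exists_involutive_of_existsUnique_compl_adj hH
  have hconj : IsConj m₁ m₂ := by
    rw [Equiv.Perm.isConj_iff_cycleType_eq,
      Equiv.Perm.cycleType_eq_replicate_of_involutive hinv₁ hfix₁,
      Equiv.Perm.cycleType_eq_replicate_of_involutive hinv₂ hfix₂]
  obtain ⟨π, hπ⟩ := isConj_iff.1 hconj
  have hcomm : ∀ v, π (m₁ v) = m₂ (π v) := fun v => by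
    rw [← hπ]; simp
  refine ⟨⟨π, fun {a b} => ?_⟩⟩
  rw [hadj₁, hadj₂, ← hcomm, π.injective.ne_iff, π.injective.ne_iff]

end SimpleGraph

/-- `C₆` is embeddable; for every embedding `σ` the graph `C₆ ⊕ σ(C₆)` is `4`-regular and
its complement is a perfect matching; hence any two such graphs are isomorphic and
`C₆` is uniquely embeddable. -/
theorem c6_uniquely_embeddable :
    (∃ σ : Equiv.Perm (ZMod 6), IsGraphEmbedding (CycGraph 6) σ) ∧
    (∀ σ : Equiv.Perm (ZMod 6), IsGraphEmbedding (CycGraph 6) σ →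
      (∀ v, ((EdgeSum (CycGraph 6) σ).neighborSet v).ncard = 4) ∧
      (∀ v, ∃! w, (EdgeSum (CycGraph 6) σ)ᶜ.Adj v w)) ∧
    (∀ σ₁ σ₂ : Equiv.Perm (ZMod 6),
      IsGraphEmbedding (CycGraph 6) σ₁ → IsGraphEmbedding (CycGraph 6) σ₂ →
      Nonempty (EdgeSum (CycGraph 6) σ₁ ≃g EdgeSum (CycGraph 6) σ₂)) := by
  have regular : ∀ σ, IsGraphEmbedding (CycGraph 6) σ →
      ∀ v, ((EdgeSum (CycGraph 6) σ).neighborSet v).ncard = 4 := fun σ hσ v => by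
    rw [hσ.ncard_neighborSet_edgeSum, CycGraph.ncard_neighborSet (by norm_num),
      CycGraph.ncard_neighborSet (by norm_num)]
  have compl_matching : ∀ σ, IsGraphEmbedding (CycGraph 6) σ →
      ∀ v, ∃! w, (EdgeSum (CycGraph 6) σ)ᶜ.Adj v w := fun σ hσ v => by
    rw [← ncard_neighborSet_eq_one_iff, ncard_neighborSet_compl, regular σ hσ, Nat.card_zmod]
  exact ⟨⟨_, isGraphEmbedding_cycGraph_six⟩, fun σ hσ => ⟨regular σ hσ, compl_matching σ hσ⟩,
    fun σ₁ σ₂ h₁ h₂ => nonempty_iso_of_existsUnique_compl_adj (compl_matching σ₁ h₁)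
      (compl_matching σ₂ h₂)⟩
end

section
/- The graph 4C₃ (four vertex-disjoint triangles on 12 vertices) is uniquely embeddable in its complement: it admits an embedding, and all graphs 4C₃ ⊕ σ(4C₃) over embeddings σ are pairwise isomorphic. -/
open SimpleGraph

/-- The disjoint union of `k` triangles `kC₃`, on vertex set `Fin k × ZMod 3`. -/
def Triangles (k : ℕ) : SimpleGraph (Fin k × ZMod 3) where
  Adj x y := x.1 = y.1 ∧ x.2 ≠ y.2
  symm := by refine ⟨?_⟩; rintro x y ⟨h1, h2⟩; exact ⟨h1.symm, h2.symm⟩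
  loopless := by refine ⟨?_⟩; rintro x ⟨_, h⟩; exact h rfl

/-! An embedding `σ` of `4C₃` sends the three vertices of each triangle into three different
triangles, so every triangle `i` misses exactly one triangle `m i` under `σ⁻¹`, and `m` is a
permutation of `Fin 4`. Labelling a vertex `v` by the triangle of `σ⁻¹ v` and by `m` of its own
triangle identifies `4C₃ ⊕ σ(4C₃)` with the rook's graph `K₄ □ K₄` with its diagonal removed:
two vertices are adjacent in `4C₃ ⊕ σ(4C₃)` iff they share a triangle of `4C₃` or of `σ(4C₃)`,
i.e. iff their labels share a coordinate. -/

lemma edgeSum_adj_iff {V : Type*} {G : SimpleGraph V} {σ : Equiv.Perm V} {v w : V} :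
    (EdgeSum G σ).Adj v w ↔ G.Adj v w ∨ G.Adj (σ.symm v) (σ.symm w) := by
  rw [EdgeSum, ← comap_symm]
  rfl

lemma IsGraphEmbedding.symm {V : Type*} {G : SimpleGraph V} {σ : Equiv.Perm V}
    (hσ : IsGraphEmbedding G σ) : IsGraphEmbedding G σ.symm := fun x y hxy hσxy =>
  hσ _ _ hσxy (by simpa using hxy)

namespace Triangles

instance (k : ℕ) : DecidableRel (Triangles k).Adj := fun _ _ =>
  inferInstanceAs (Decidable (_ ∧ _))

lemma adj_iff {k : ℕ} {v w : Fin k × ZMod 3} : (Triangles k).Adj v w ↔ v ≠ w ∧ v.1 = w.1 :=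
  ⟨fun ⟨h1, h2⟩ => ⟨fun h => h2 (h ▸ rfl), h1⟩, fun ⟨h1, h2⟩ => ⟨h2, fun h => h1 (Prod.ext h2 h)⟩⟩

lemma edgeSum_adj_iff {k : ℕ} {σ : Equiv.Perm (Fin k × ZMod 3)} {v w : Fin k × ZMod 3} :
    (EdgeSum (Triangles k) σ).Adj v w ↔
      v ≠ w ∧ (v.1 = w.1 ∨ (σ.symm v).1 = (σ.symm w).1) := by
  rw [_root_.edgeSum_adj_iff, adj_iff, adj_iff, σ.symm.injective.ne_iff, and_or_left]

end Triangles

namespace IsGraphEmbedding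

variable {k : ℕ} {σ : Equiv.Perm (Fin k × ZMod 3)}

lemma fst_injective (hσ : IsGraphEmbedding (Triangles k) σ) (i : Fin k) :
    Function.Injective fun a : ZMod 3 => (σ (i, a)).1 := by
  intro a b h
  by_contra hab
  have hne : σ (i, a) ≠ σ (i, b) := σ.injective.ne fun h => hab (congrArg Prod.snd h)
  exact hσ (i, a) (i, b) ⟨rfl, hab⟩ (Triangles.adj_iff.2 ⟨hne, h⟩)

lemma eq_of_fst_eq (hσ : IsGraphEmbedding (Triangles k) σ) {v w : Fin k × ZMod 3}
    (h : v.1 = w.1) (hσvw : (σ v).1 = (σ w).1) : v = w := by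
  by_contra hvw
  exact hσ _ _ (Triangles.adj_iff.2 ⟨hvw, h⟩) (Triangles.adj_iff.2 ⟨σ.injective.ne hvw, hσvw⟩)

end IsGraphEmbedding

lemma Fin.six_sub_add_add_eq_iff : ∀ {a b c d : Fin 4}, a ≠ b → a ≠ c → b ≠ c →
    (6 - (a + b + c) = d ↔ a ≠ d ∧ b ≠ d ∧ c ≠ d) := by
  decide

/-- The triangle that `σ` misses on triangle `i` (the four indices sum to `0 + 1 + 2 + 3 = 6`). -/
def missingTriangle (σ : Equiv.Perm (Fin 4 × ZMod 3)) (i : Fin 4) : Fin 4 :=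
  6 - ((σ (i, 0)).1 + (σ (i, 1)).1 + (σ (i, 2)).1)

section missingTriangle

variable {σ : Equiv.Perm (Fin 4 × ZMod 3)} (hσ : IsGraphEmbedding (Triangles 4) σ)
include hσ

lemma missingTriangle_eq_iff (i j : Fin 4) :
    missingTriangle σ i = j ↔ ∀ a, (σ (i, a)).1 ≠ j := by
  have hinj := hσ.fst_injective i
  rw [missingTriangle, Fin.six_sub_add_add_eq_iff (hinj.ne (by decide)) (hinj.ne (by decide))
    (hinj.ne (by decide))]
  refine ⟨fun ⟨h0, h1, h2⟩ a => ?_, fun h => ⟨h 0, h 1, h 2⟩⟩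
  fin_cases a <;> assumption

lemma missingTriangle_symm_eq_iff (i j : Fin 4) :
    missingTriangle σ.symm j = i ↔ missingTriangle σ i = j := by
  rw [missingTriangle_eq_iff hσ.symm, missingTriangle_eq_iff hσ, ← not_exists, ← not_exists]
  refine not_congr ⟨fun ⟨b, hb⟩ => ⟨(σ.symm (j, b)).2, ?_⟩, fun ⟨a, ha⟩ => ⟨(σ (i, a)).2, ?_⟩⟩
  · rw [← hb, Equiv.apply_symm_apply]
  · rw [← ha, Equiv.symm_apply_apply]

lemma missingTriangle_symm_injective : Function.Injective (missingTriangle σ.symm) :=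
  Function.LeftInverse.injective (g := missingTriangle σ) fun j =>
    (missingTriangle_symm_eq_iff hσ _ j).1 rfl

end missingTriangle

lemma boxProd_top_adj_iff {α β : Type*} {x y : α × β} :
    ((⊤ : SimpleGraph α) □ (⊤ : SimpleGraph β)).Adj x y ↔ x ≠ y ∧ (x.1 = y.1 ∨ x.2 = y.2) := by
  rw [boxProd_adj, top_adj, top_adj, Ne, Ne, Ne, Prod.ext_iff]
  tauto

def offDiagonalRookGraph (n : ℕ) : SimpleGraph {x : Fin n × Fin n | x.1 ≠ x.2} :=
  ((⊤ : SimpleGraph (Fin n)) □ ⊤).induce {x | x.1 ≠ x.2}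

section rookLabel

variable {σ : Equiv.Perm (Fin 4 × ZMod 3)} (hσ : IsGraphEmbedding (Triangles 4) σ)

def rookLabel (v : Fin 4 × ZMod 3) : {x : Fin 4 × Fin 4 | x.1 ≠ x.2} :=
  ⟨((σ.symm v).1, missingTriangle σ.symm v.1), fun h =>
    (missingTriangle_eq_iff hσ.symm v.1 _).1 h.symm v.2 rfl⟩

lemma rookLabel_injective : Function.Injective (rookLabel hσ) := fun _ _ h =>
  hσ.symm.eq_of_fst_eq (missingTriangle_symm_injective hσ (congrArg (·.1.2) h))
    (congrArg (·.1.1) h)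

lemma rookLabel_bijective : Function.Bijective (rookLabel hσ) :=
  (Fintype.bijective_iff_injective_and_card _).2 ⟨rookLabel_injective hσ, by decide⟩

noncomputable def edgeSumIsoOffDiagonalRookGraph :
    EdgeSum (Triangles 4) σ ≃g offDiagonalRookGraph 4 where
  toEquiv := Equiv.ofBijective _ (rookLabel_bijective hσ)
  map_rel_iff' {_ _} := by
    rw [Equiv.ofBijective_apply, Equiv.ofBijective_apply, offDiagonalRookGraph, induce_adj,
      boxProd_top_adj_iff, Triangles.edgeSum_adj_iff, ← (rookLabel_injective hσ).ne_iff,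
      Subtype.coe_ne_coe]
    simp only [rookLabel, (missingTriangle_symm_injective hσ).eq_iff]
    tauto

end rookLabel

def shiftEmbedding : Equiv.Perm (Fin 4 × ZMod 3) where
  toFun v := (v.1 + Fin.castSucc (n := 3) v.2, v.2)
  invFun v := (v.1 - Fin.castSucc (n := 3) v.2, v.2)
  left_inv _ := Prod.ext (add_sub_cancel_right _ _) rfl
  right_inv _ := Prod.ext (sub_add_cancel _ _) rfl

lemma isGraphEmbedding_shiftEmbedding : IsGraphEmbedding (Triangles 4) shiftEmbedding := by
  unfold IsGraphEmbedding
  decide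

/-- `4C₃` is uniquely embeddable: it admits an embedding and all edge-sum graphs over
embeddings are pairwise isomorphic. -/
theorem four_c3_uniquely_embeddable :
    (∃ σ : Equiv.Perm (Fin 4 × ZMod 3), IsGraphEmbedding (Triangles 4) σ) ∧
    ∀ σ₁ σ₂ : Equiv.Perm (Fin 4 × ZMod 3),
      IsGraphEmbedding (Triangles 4) σ₁ → IsGraphEmbedding (Triangles 4) σ₂ →
      Nonempty (EdgeSum (Triangles 4) σ₁ ≃g EdgeSum (Triangles 4) σ₂) :=
  ⟨⟨shiftEmbedding, isGraphEmbedding_shiftEmbedding⟩, fun _ _ h₁ h₂ =>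
    ⟨(edgeSumIsoOffDiagonalRookGraph h₁).trans (edgeSumIsoOffDiagonalRookGraph h₂).symm⟩⟩
end
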